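/- (Stackelberg, interior-maximum case, Case 6 of Theorem 2.) Suppose (ln τ)·(k0 − k1) > 0 and k0 + k1 > 0, and set d* = √(2·(ln τ)·(k0 − k1)/(k0 + k1)) (which is a positive real). Then r is strictly increasing on (0, d*] and strictly decreasing on [d*, ∞); consequently, for every d_max ≥ d*, the minimum of r over (0, d_max] is approached only at the endpoints, i.e., inf over (0,d_max] of r equals min{inf_{d→0+} r(d), r(d_max)}. -/

import Mathlib

/-!
Up to the positive factor `(2π)^{-1/2} exp(-(ln²τ/(2d²) + d²/8))`, the derivative of `r` is
`(ln τ)(k0 − k1)/d² − (k0 + k1)/2`: completing the square splits `exp(-(ζ(±ln τ/d + d/2))²/2)`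
into that common factor times `τ^{∓1/2}`, which is how `k0` and `k1` appear. Under the case
hypotheses this is positive exactly for `d < d*` and negative for `d > d*`. The infimum over
`(0, d_max] = (0, d*) ∪ [d*, d_max]` is then the infimum of an increasing bounded function on
`(0, d*)`, which is its right limit at `0`, against the minimum `r(d_max)` of a decreasing one.
-/

open Filter

/-- The Gaussian Q-function `Q(x) = (1/√(2π)) ∫_x^∞ exp(−t²/2) dt`. -/
noncomputable def gaussQ (x : ℝ) : ℝ :=
  (Real.sqrt (2 * Real.pi))⁻¹ * ∫ t in Set.Ioi x, Real.exp (-(t ^ 2 / 2))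

open Set Real

lemma integrable_exp_neg_sq_div_two : MeasureTheory.Integrable fun t : ℝ => exp (-(t ^ 2 / 2)) := by
  simpa [neg_div, div_eq_inv_mul] using integrable_exp_neg_mul_sq (by norm_num : (0 : ℝ) < 1 / 2)

lemma integral_exp_neg_sq_div_two : ∫ t : ℝ, exp (-(t ^ 2 / 2)) = √(2 * π) := by
  simpa [neg_div, div_eq_inv_mul, mul_comm] using integral_gaussian (1 / 2)

lemma gaussQ_nonneg (x : ℝ) : 0 ≤ gaussQ x :=
  mul_nonneg (inv_nonneg.2 (sqrt_nonneg _)) <|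
    MeasureTheory.setIntegral_nonneg measurableSet_Ioi fun _ _ => (exp_pos _).le

lemma gaussQ_le_one (x : ℝ) : gaussQ x ≤ 1 := by
  have hint := MeasureTheory.setIntegral_le_integral (s := Ioi x)
    integrable_exp_neg_sq_div_two (Eventually.of_forall fun _ => (exp_pos _).le)
  rw [integral_exp_neg_sq_div_two] at hint
  rw [gaussQ, inv_mul_le_iff₀ (sqrt_pos.2 (by positivity)), mul_one]
  exact hint

lemma neg_abs_le_mul_gaussQ (a x : ℝ) : -|a| ≤ a * gaussQ x := by
  refine (abs_le.1 ?_).1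
  rw [abs_mul, abs_of_nonneg (gaussQ_nonneg x)]
  exact mul_le_of_le_one_right (abs_nonneg a) (gaussQ_le_one x)

lemma gaussQ_eq_sub_intervalIntegral (x : ℝ) :
    gaussQ x = (√(2 * π))⁻¹ *
      ((∫ t in Ioi 0, exp (-(t ^ 2 / 2))) - ∫ t in (0 : ℝ)..x, exp (-(t ^ 2 / 2))) := by
  rw [← intervalIntegral.integral_Ioi_sub_Ioi' integrable_exp_neg_sq_div_two.integrableOn
    integrable_exp_neg_sq_div_two.integrableOn, sub_sub_cancel, gaussQ]

lemma hasDerivAt_gaussQ (x : ℝ) :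
    HasDerivAt gaussQ (-((√(2 * π))⁻¹ * exp (-(x ^ 2 / 2)))) x := by
  have hcont : Continuous fun t : ℝ => exp (-(t ^ 2 / 2)) := by fun_prop
  rw [funext gaussQ_eq_sub_intervalIntegral]
  simpa using ((hasDerivAt_const x _).sub
    (hcont.integral_hasStrictDerivAt 0 x).hasDerivAt).const_mul (√(2 * π))⁻¹

lemma hasDerivAt_gaussQ_mul_div_add_half {ζ : ℝ} (hζ : ζ ^ 2 = 1) (a : ℝ) {d : ℝ} (hd : d ≠ 0) :
    HasDerivAt (fun x => gaussQ (ζ * (a / x + x / 2)))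
      (ζ * (a / d ^ 2 - 1 / 2) * exp (-a / 2) *
        ((√(2 * π))⁻¹ * exp (-(a ^ 2 / (2 * d ^ 2) + d ^ 2 / 8)))) d := by
  have hinner : HasDerivAt (fun x => ζ * (a / x + x / 2)) (ζ * (a * -(d ^ 2)⁻¹ + 1 / 2)) d := by
    simpa only [div_eq_mul_inv] using
      (((hasDerivAt_inv hd).const_mul a).fun_add ((hasDerivAt_id' d).div_const 2)).const_mul ζ
  have hsquare : exp (-((ζ * (a / d + d / 2)) ^ 2 / 2))
      = exp (-a / 2) * exp (-(a ^ 2 / (2 * d ^ 2) + d ^ 2 / 8)) := by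
    rw [← exp_add, mul_pow, hζ, one_mul]
    congr 1
    field_simp
    ring
  refine ((hasDerivAt_gaussQ _).comp d hinner).congr_deriv ?_
  rw [hsquare]
  field_simp
  ring

lemma hasDerivAt_risk {ζ : ℝ} (hζ : ζ ^ 2 = 1) (p c0 c1 L k0 k1 : ℝ)
    (hk0 : k0 = c0 * ζ * exp (-L / 2)) (hk1 : k1 = c1 * ζ * exp (L / 2)) {d : ℝ} (hd : d ≠ 0) :
    HasDerivAt (fun x => p + c0 * gaussQ (ζ * (L / x + x / 2)) + c1 * gaussQ (ζ * (-L / x + x / 2)))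
      ((L * (k0 - k1) / d ^ 2 - (k0 + k1) / 2) *
        ((√(2 * π))⁻¹ * exp (-(L ^ 2 / (2 * d ^ 2) + d ^ 2 / 8)))) d := by
  have h0 := hasDerivAt_gaussQ_mul_div_add_half hζ L hd
  have h1 := hasDerivAt_gaussQ_mul_div_add_half hζ (-L) hd
  rw [neg_sq, neg_neg] at h1
  refine (((h0.const_mul c0).const_add p).fun_add (h1.const_mul c1)).congr_deriv ?_
  rw [hk0, hk1]
  ring

section Unimodal

variable {f e : ℝ → ℝ} {a b : ℝ}

lemma strictMonoOn_Ioc_sqrt_div_of_hasDerivAt (hb : 0 < b) (he : ∀ x, 0 < x → 0 < e x)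
    (hf : ∀ x, 0 < x → HasDerivAt f ((a / x ^ 2 - b) * e x) x) :
    StrictMonoOn f (Ioc 0 √(a / b)) := by
  refine strictMonoOn_of_deriv_pos (convex_Ioc _ _)
    (fun x hx => (hf x hx.1).continuousAt.continuousWithinAt) fun x hx => ?_
  rw [interior_Ioc] at hx
  have hx2 : x ^ 2 < a / b := (lt_sqrt hx.1.le).1 hx.2
  rw [(hf x hx.1).deriv]
  refine mul_pos (sub_pos.2 ?_) (he x hx.1)
  rw [lt_div_iff₀ (pow_pos hx.1 2)]
  rw [lt_div_iff₀ hb] at hx2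
  linarith

lemma strictAntiOn_Ici_sqrt_div_of_hasDerivAt (ha : 0 < a) (hb : 0 < b)
    (he : ∀ x, 0 < x → 0 < e x) (hf : ∀ x, 0 < x → HasDerivAt f ((a / x ^ 2 - b) * e x) x) :
    StrictAntiOn f (Ici √(a / b)) := by
  have hc : 0 < √(a / b) := sqrt_pos.2 (div_pos ha hb)
  refine strictAntiOn_of_deriv_neg (convex_Ici _)
    (fun x hx => (hf x (hc.trans_le hx)).continuousAt.continuousWithinAt) fun x hx => ?_
  rw [interior_Ici] at hx
  have hx0 : 0 < x := hc.trans hx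
  have hx2 : a / b < x ^ 2 := (sqrt_lt' hx0).1 hx
  rw [(hf x hx0).deriv]
  refine mul_neg_of_neg_of_pos (sub_neg.2 ?_) (he x hx0)
  rw [div_lt_iff₀ (pow_pos hx0 2)]
  rw [div_lt_iff₀ hb] at hx2
  linarith

end Unimodal

lemma exists_tendsto_and_sInf_image_Ioc_eq_min {f : ℝ → ℝ} {c b : ℝ} (hc : 0 < c) (hcb : c ≤ b)
    (hmono : MonotoneOn f (Ioo 0 c)) (hanti : AntitoneOn f (Icc c b))
    (hbdd : BddBelow (f '' Ioo 0 c)) :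
    ∃ L, Tendsto f (nhdsWithin 0 (Ioi 0)) (nhds L) ∧ sInf (f '' Ioc 0 b) = min L (f b) := by
  have hne : (Ioo 0 c).Nonempty := nonempty_Ioo.2 hc
  have hleft : IsGLB (f '' Ioo 0 c) (sInf (f '' Ioo 0 c)) := isGLB_csInf (hne.image f) hbdd
  have hright : IsGLB (f '' Icc c b) (f b) := (hanti.map_isGreatest (isGreatest_Icc hcb)).isGLB
  refine ⟨_, hmono.tendsto_nhdsWithin_Ioo_right hne hbdd, ?_⟩
  rw [← Ioo_union_Icc_eq_Ioc hc hcb, image_union]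
  exact (hleft.union hright).csInf_eq ((hne.image f).mono subset_union_left)

theorem stmt_10_general (π0 π1 C00 C01 C10 C11 τ ζ : ℝ)
    (hτ : 0 < τ) (hζ : ζ = 1 ∨ ζ = -1)
    (k0 k1 : ℝ)
    (hk0 : k0 = π0 * ζ * (C10 - C00) * τ ^ (-(1 / 2) : ℝ))
    (hk1 : k1 = π1 * ζ * (C01 - C11) * τ ^ ((1 / 2) : ℝ))
    (r : ℝ → ℝ)
    (hr : r = fun d : ℝ => π0 * C00 + π1 * C11
        + π0 * (C10 - C00) * gaussQ (ζ * (Real.log τ / d + d / 2))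
        + π1 * (C01 - C11) * gaussQ (ζ * (-Real.log τ / d + d / 2)))
    (hcase1 : 0 < Real.log τ * (k0 - k1)) (hcase2 : 0 < k0 + k1)
    (dstar : ℝ)
    (hdstar : dstar = Real.sqrt (2 * Real.log τ * (k0 - k1) / (k0 + k1))) :
    0 < dstar ∧
    StrictMonoOn r (Set.Ioc (0 : ℝ) dstar) ∧
    StrictAntiOn r (Set.Ici dstar) ∧
    (∀ dmax : ℝ, dstar ≤ dmax →
      ∃ L : ℝ, Tendsto r (nhdsWithin 0 (Set.Ioi (0 : ℝ))) (nhds L) ∧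
        sInf (r '' Set.Ioc (0 : ℝ) dmax) = min L (r dmax)) := by
  have hζ2 : ζ ^ 2 = 1 := by rcases hζ with rfl | rfl <;> norm_num
  have hb : 0 < (k0 + k1) / 2 := by linarith
  have hdstar' : dstar = √(Real.log τ * (k0 - k1) / ((k0 + k1) / 2)) := by
    rw [hdstar, div_div_eq_mul_div]
    ring_nf
  have hderiv (d : ℝ) (hd : 0 < d) := hasDerivAt_risk hζ2 (π0 * C00 + π1 * C11)
    (π0 * (C10 - C00)) (π1 * (C01 - C11)) (Real.log τ) k0 k1
    (by rw [hk0, rpow_def_of_pos hτ]; ring_nf) (by rw [hk1, rpow_def_of_pos hτ]; ring_nf) hd.ne'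
  rw [← hr] at hderiv
  have hpos (d : ℝ) (_ : 0 < d) :
      0 < (√(2 * π))⁻¹ * exp (-(Real.log τ ^ 2 / (2 * d ^ 2) + d ^ 2 / 8)) := by positivity
  have hmono := strictMonoOn_Ioc_sqrt_div_of_hasDerivAt hb hpos hderiv
  have hanti := strictAntiOn_Ici_sqrt_div_of_hasDerivAt hcase1 hb hpos hderiv
  have hbdd : BddBelow (range r) := by
    refine ⟨π0 * C00 + π1 * C11 - |π0 * (C10 - C00)| - |π1 * (C01 - C11)|, ?_⟩
    rintro _ ⟨d, rfl⟩
    rw [hr]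
    linarith [neg_abs_le_mul_gaussQ (π0 * (C10 - C00)) (ζ * (Real.log τ / d + d / 2)),
      neg_abs_le_mul_gaussQ (π1 * (C01 - C11)) (ζ * (-Real.log τ / d + d / 2))]
  rw [← hdstar'] at hmono hanti
  have hd0 : 0 < dstar := hdstar' ▸ sqrt_pos.2 (div_pos hcase1 hb)
  refine ⟨hd0, hmono, hanti, fun dmax hdmax => ?_⟩
  exact exists_tendsto_and_sInf_image_Ioc_eq_min hd0 hdmax
    (hmono.monotoneOn.mono Ioo_subset_Ioc_self) (hanti.antitoneOn.mono Icc_subset_Ici_self)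
    (hbdd.mono (image_subset_range _ _))

/-- Stackelberg, interior-maximum case (Case 6 of Theorem 2): if
`(ln τ)·(k0 − k1) > 0` and `k0 + k1 > 0`, the transmitter Bayes risk is strictly
increasing on `(0, d*]` and strictly decreasing on `[d*, ∞)`, where
`d* = √(2·(ln τ)·(k0 − k1)/(k0 + k1))`; hence for `d_max ≥ d*` the infimum of
`r` over `(0, d_max]` is `min{lim_{d→0⁺} r(d), r(d_max)}`. -/
theorem stmt_10 (π0 π1 C00 C01 C10 C11 τ ζ : ℝ)
    (hπ0 : 0 < π0) (hπ1 : 0 < π1) (hτ : 0 < τ) (hζ : ζ = 1 ∨ ζ = -1)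
    (k0 k1 : ℝ)
    (hk0 : k0 = π0 * ζ * (C10 - C00) * τ ^ (-(1 / 2) : ℝ))
    (hk1 : k1 = π1 * ζ * (C01 - C11) * τ ^ ((1 / 2) : ℝ))
    (r : ℝ → ℝ)
    (hr : r = fun d : ℝ => π0 * C00 + π1 * C11
        + π0 * (C10 - C00) * gaussQ (ζ * (Real.log τ / d + d / 2))
        + π1 * (C01 - C11) * gaussQ (ζ * (-Real.log τ / d + d / 2)))
    (hcase1 : 0 < Real.log τ * (k0 - k1)) (hcase2 : 0 < k0 + k1)
    (dstar : ℝ)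
    (hdstar : dstar = Real.sqrt (2 * Real.log τ * (k0 - k1) / (k0 + k1))) :
    0 < dstar ∧
    StrictMonoOn r (Set.Ioc (0 : ℝ) dstar) ∧
    StrictAntiOn r (Set.Ici dstar) ∧
    (∀ dmax : ℝ, dstar ≤ dmax →
      ∃ L : ℝ, Tendsto r (nhdsWithin 0 (Set.Ioi (0 : ℝ))) (nhds L) ∧
        sInf (r '' Set.Ioc (0 : ℝ) dmax) = min L (r dmax)) :=
  stmt_10_general π0 π1 C00 C01 C10 C11 τ ζ hτ hζ k0 k1 hk0 hk1 r hr hcase1 hcase2 dstar hdstar
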